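/- arXiv:2304.08745 — 2 statements merged into one kernel-verified Lean document; each statement's English description precedes it below -/
import Mathlib

section
/- The number Γ of r-tuples (T_1,...,T_r) of meta-queries (each a set of k node-disjoint paths of length d in a graph with at most d·B^{d+1} edges, with each T_i determined by its edge set) in which every edge occurs zero or at least two times in total satisfies Γ ≤ C(dB^{d+1}, rkd/2) · C(rkd/2, kd)^r ≤ ((e^3 r B^{d+1})/(2k))^{rkd/2}. -/
/-!
Every edge used by a tuple is used at least twice, so the `r` edge sets, of `kd` edges each, have
a union of at most `rkd/2` edges. The tuple is therefore determined by an `rkd/2`-set of edges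
containing this union together with `r` subsets of it of size `kd`. The bound
`C(a, b) ≤ (e a / b)^b`, applied to both binomials, and `r · kd = 2 · (rkd/2)` give the estimate.
-/

open Finset

theorem Finset.card_biUnion_mul_le_sum_card {ι α : Type*} [DecidableEq α] {s : Finset ι}
    {f : ι → Finset α} {n : ℕ} (h : ∀ a ∈ s.biUnion f, n ≤ #{i ∈ s | a ∈ f i}) :
    #(s.biUnion f) * n ≤ ∑ i ∈ s, #(f i) :=
  calc #(s.biUnion f) * n
      ≤ ∑ a ∈ s.biUnion f, #{i ∈ s | a ∈ f i} := by
        simpa [mul_comm] using (s.biUnion f).card_nsmul_le_sum _ n h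
    _ = ∑ i ∈ s, #{a ∈ s.biUnion f | a ∈ f i} := by
        simp only [card_eq_sum_ones, sum_filter]
        exact sum_comm
    _ = ∑ i ∈ s, #(f i) := by
        refine sum_congr rfl fun i hi => ?_
        rw [filter_mem_eq_inter, inter_eq_right.mpr (subset_biUnion_of_mem f hi)]

theorem Finset.card_biUnion_le_of_mem_zero_or_two_le {ι α : Type*} [Fintype ι] [DecidableEq α]
    {f : ι → Finset α} {m : ℕ} (hf : ∀ i, #(f i) = m)
    (h : ∀ a, #{i | a ∈ f i} = 0 ∨ 2 ≤ #{i | a ∈ f i}) :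
    #(univ.biUnion f) ≤ Fintype.card ι * m / 2 := by
  have hdouble : #(univ.biUnion f) * 2 ≤ ∑ i, #(f i) :=
    card_biUnion_mul_le_sum_card fun a ha => by
      obtain ⟨i, -, hi⟩ := mem_biUnion.mp ha
      exact (h a).resolve_left (card_ne_zero.mpr ⟨i, by simpa using hi⟩)
  simpa [hf, Nat.le_div_iff_mul_le two_pos] using hdouble

theorem Nat.choose_le_exp_one_mul_div_pow (a b : ℕ) :
    (a.choose b : ℝ) ≤ (Real.exp 1 * a / b) ^ b := by
  have hb : (0 : ℝ) < (b : ℝ) ^ b := by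
    rcases b.eq_zero_or_pos with rfl | hb
    · simp
    · positivity
  have hfact : (b : ℝ) ^ b ≤ Real.exp 1 ^ b * b.factorial := by
    rw [← div_le_iff₀ (by positivity), Real.exp_one_pow]
    exact Real.pow_div_factorial_le_exp _ b.cast_nonneg b
  calc (a.choose b : ℝ) ≤ (a : ℝ) ^ b / b.factorial := Nat.choose_le_pow_div b a
    _ ≤ (a : ℝ) ^ b * Real.exp 1 ^ b / (b : ℝ) ^ b := by
        rw [div_le_div_iff₀ (by positivity) hb, mul_assoc]
        gcongr
    _ = (Real.exp 1 * a / b) ^ b := by rw [div_pow, mul_pow, mul_comm]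

theorem Nat.choose_mul_choose_pow_le {N n m r : ℕ} (h : r * m = 2 * n) :
    (N.choose n : ℝ) * (n.choose m : ℝ) ^ r ≤ (Real.exp 1 ^ 3 * N * n / m ^ 2) ^ n := by
  calc (N.choose n : ℝ) * (n.choose m : ℝ) ^ r
      ≤ (Real.exp 1 * N / n) ^ n * ((Real.exp 1 * n / m) ^ m) ^ r := by
        gcongr
        exacts [N.choose_le_exp_one_mul_div_pow n, n.choose_le_exp_one_mul_div_pow m]
    _ = (Real.exp 1 * N / n * (Real.exp 1 * n / m) ^ 2) ^ n := by
        rw [← pow_mul, mul_comm m, h, pow_mul, ← mul_pow]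
    _ = (Real.exp 1 ^ 3 * N * n / m ^ 2) ^ n := by
        rcases n.eq_zero_or_pos with rfl | hn
        · simp
        · congr 1
          field_simp

theorem Finset.card_le_choose_mul_choose_pow {α ι : Type*} [Fintype α] [DecidableEq α]
    [Fintype ι] {N n m : ℕ} (hα : Fintype.card α ≤ N) (hn : n ≤ N) (F : Finset (ι → Finset α))
    (hF_card : ∀ f ∈ F, ∀ i, #(f i) = m) (hF_union : ∀ f ∈ F, #(univ.biUnion f) ≤ n) :
    #F ≤ N.choose n * n.choose m ^ Fintype.card ι := by
  classical
  by_cases hnα : n ≤ Fintype.card α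
  · -- every tuple consists of `m`-subsets of one `n`-set containing their union
    have hF : F ⊆ (univ.powersetCard n).biUnion
        fun S : Finset α => Fintype.piFinset fun _ : ι => S.powersetCard m := by
      intro f hf
      obtain ⟨S, hfS, -, hS⟩ :=
        exists_subsuperset_card_eq (subset_univ _) (hF_union f hf) (by simpa using hnα)
      simp only [mem_biUnion, mem_powersetCard, Fintype.mem_piFinset]
      exact ⟨S, ⟨subset_univ S, hS⟩, fun i =>
        ⟨(subset_biUnion_of_mem f (mem_univ i)).trans hfS, hF_card f hf i⟩⟩
    calc #F ≤ ∑ S ∈ univ.powersetCard n,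
          #(Fintype.piFinset fun _ : ι => S.powersetCard m) := (card_le_card hF).trans card_biUnion_le
      _ = (Fintype.card α).choose n * n.choose m ^ Fintype.card ι := by
        rw [sum_congr rfl fun S hS => by
          rw [Fintype.card_piFinset, prod_const, card_powersetCard, (mem_powersetCard.mp hS).2,
            card_univ]]
        simp
      _ ≤ N.choose n * n.choose m ^ Fintype.card ι := by gcongr
  · -- no `n`-set exists, so count all tuples of `m`-sets instead
    have hF : F ⊆ Fintype.piFinset fun _ : ι => univ.powersetCard m := fun f hf => by
      simp only [Fintype.mem_piFinset, mem_powersetCard]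
      exact fun i => ⟨subset_univ _, hF_card f hf i⟩
    calc #F ≤ (Fintype.card α).choose m ^ Fintype.card ι := by
          simpa [Fintype.card_piFinset] using card_le_card hF
      _ ≤ n.choose m ^ Fintype.card ι := by gcongr; omega
      _ ≤ N.choose n * n.choose m ^ Fintype.card ι := Nat.le_mul_of_pos_left _ (Nat.choose_pos hn)

theorem gamma_bound_general
    {E : Type} [Fintype E] [DecidableEq E]
    (B d r k : ℕ) (hd : 1 ≤ d) (hk : 1 ≤ k)
    (hE : Fintype.card E ≤ d * B ^ (d + 1))
    (hdvd : 2 ∣ r * k * d)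
    (hle₂ : r * k * d / 2 ≤ d * B ^ (d + 1))
    (valid : Finset E → Prop) [DecidablePred valid]
    (hcard : ∀ S, valid S → S.card = k * d) :
    (((univ : Finset (Fin r → Finset E)).filter
        (fun f => (∀ i, valid (f i)) ∧
          ∀ e : E,
            ((univ : Finset (Fin r)).filter (fun i => e ∈ f i)).card = 0 ∨
            2 ≤ ((univ : Finset (Fin r)).filter (fun i => e ∈ f i)).card)).card
      ≤ Nat.choose (d * B ^ (d + 1)) (r * k * d / 2)
          * Nat.choose (r * k * d / 2) (k * d) ^ r) ∧
    ((Nat.choose (d * B ^ (d + 1)) (r * k * d / 2)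
          * Nat.choose (r * k * d / 2) (k * d) ^ r : ℝ)
      ≤ ((Real.exp 1 ^ 3 * r * B ^ (d + 1)) / (2 * k)) ^ (r * k * d / 2)) := by
  refine ⟨(card_le_choose_mul_choose_pow (m := k * d) hE hle₂ _ ?_ ?_).trans_eq
    (by rw [Fintype.card_fin]), ?_⟩
  · intro f hf i
    exact hcard _ ((mem_filter.mp hf).2.1 i)
  · intro f hf
    obtain ⟨hvalid, hdeg⟩ := (mem_filter.mp hf).2
    simpa [mul_assoc] using
      card_biUnion_le_of_mem_zero_or_two_le (fun i => hcard _ (hvalid i)) hdeg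
  · have h2n : 2 * (r * k * d / 2) = r * k * d := Nat.mul_div_cancel' hdvd
    calc _ ≤ (Real.exp 1 ^ 3 * (d * B ^ (d + 1) : ℕ) * (r * k * d / 2 : ℕ) / (k * d : ℕ) ^ 2)
            ^ (r * k * d / 2) := Nat.choose_mul_choose_pow_le (by rw [h2n]; ring)
      _ = _ := by
        have hn_cast : ((r * k * d / 2 : ℕ) : ℝ) = r * k * d / 2 := by
          rw [eq_div_iff two_ne_zero, mul_comm]; exact_mod_cast h2n
        have hd₀ : (0 : ℝ) < d := by exact_mod_cast hd
        have hk₀ : (0 : ℝ) < k := by exact_mod_cast hk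
        push_cast [hn_cast]
        field_simp

/-- Counting tuples of meta-queries in which every edge occurs zero or at least two
times. Meta-queries are identified with their edge sets (each being the union of `k`
node-disjoint paths of length `d`, hence of cardinality `kd`, and determining the
meta-query), in a graph with at most `d·B^{d+1}` edges. The number `Γ` of `r`-tuples
`(T 1, …, T r)` of meta-queries in which every edge occurs in total zero or at least
two times satisfies
`Γ ≤ C(dB^{d+1}, rkd/2) · C(rkd/2, kd)^r ≤ ((e³ r B^{d+1})/(2k))^{rkd/2}`. -/
theorem gamma_bound
    {E : Type} [Fintype E] [DecidableEq E]
    (B d r k : ℕ) (hB : 1 ≤ B) (hd : 1 ≤ d) (hr : 1 ≤ r) (hk : 1 ≤ k)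
    (hE : Fintype.card E ≤ d * B ^ (d + 1))
    (hdvd : 2 ∣ r * k * d)
    (hle₁ : k * d ≤ r * k * d / 2) (hle₂ : r * k * d / 2 ≤ d * B ^ (d + 1))
    (valid : Finset E → Prop) [DecidablePred valid]
    (hcard : ∀ S, valid S → S.card = k * d) :
    (((univ : Finset (Fin r → Finset E)).filter
        (fun f => (∀ i, valid (f i)) ∧
          ∀ e : E,
            ((univ : Finset (Fin r)).filter (fun i => e ∈ f i)).card = 0 ∨
            2 ≤ ((univ : Finset (Fin r)).filter (fun i => e ∈ f i)).card)).card
      ≤ Nat.choose (d * B ^ (d + 1)) (r * k * d / 2)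
          * Nat.choose (r * k * d / 2) (k * d) ^ r) ∧
    ((Nat.choose (d * B ^ (d + 1)) (r * k * d / 2)
          * Nat.choose (r * k * d / 2) (k * d) ^ r : ℝ)
      ≤ ((Real.exp 1 ^ 3 * r * B ^ (d + 1)) / (2 * k)) ^ (r * k * d / 2)) :=
  gamma_bound_general B d r k hd hk hE hdvd hle₂ valid hcard
end

section
/- In the reachability gadget built from a Butterfly graph G with b-bit edge labels, where each node u of G is replaced by 2^b copies u^σ (σ ∈ {0,1}^b) and each edge (u,v) of G with label σ yields edges (u^τ, v^{τ⊕σ}) for all τ, the following holds: for any source s and sink t of G, the node s^{0...0} reaches exactly one copy t^σ of t, namely with σ equal to the XOR of the labels along the unique s-t path in G. In particular, s^{0...0} reaches t^{0...0} if and only if that XOR is the all-zero string. -/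
open Finset

/-- Butterfly edge condition: base-`B` digits agree in all positions `c ≠ i`. -/
def BFEdge (B i j k : ℕ) : Prop :=
  ∀ c : ℕ, c ≠ i → j / B ^ c % B = k / B ^ c % B

/-- Node visited at layer `i` by the unique `s`-`t` path in the Butterfly of degree `B`. -/
def bfNode (B s t i : ℕ) : ℕ := t % B ^ i + (s / B ^ i) * B ^ i

/-- XOR of the `b`-bit labels along the unique `s`-`t` path of the Butterfly of
degree `B` and depth `d`, where `label i j k` is the label of the edge from node `j`
in layer `i` to node `k` in layer `i+1`. -/
def bfPathXor (B d b : ℕ) (label : ℕ → ℕ → ℕ → (Fin b → ZMod 2)) (s t : ℕ) :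
    Fin b → ZMod 2 :=
  ∑ i ∈ Finset.range d, label i (bfNode B s t i) (bfNode B s t (i + 1))

/-- One step in the reachability gadget `G'` built from the labelled Butterfly `G`:
each node `u` of `G` is replaced by copies `u^σ`, `σ ∈ {0,1}^b`, and an edge
`(u,v)` of `G` with label `σ` yields the edges `(u^τ, v^{τ ⊕ σ})` for all `τ`. -/
def GadgetStep (B d b : ℕ) (label : ℕ → ℕ → ℕ → (Fin b → ZMod 2)) :
    ((ℕ × ℕ) × (Fin b → ZMod 2)) → ((ℕ × ℕ) × (Fin b → ZMod 2)) → Prop :=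
  fun x y =>
    y.1.1 = x.1.1 + 1 ∧ x.1.1 < d ∧ x.1.2 < B ^ d ∧ y.1.2 < B ^ d ∧
    BFEdge B x.1.1 x.1.2 y.1.2 ∧
    y.2 = x.2 + label x.1.1 x.1.2 y.1.2

lemma digits_zero {B : ℕ} (hB : 1 < B) {a : ℕ} (h : ∀ c, a / B ^ c % B = 0) : a = 0 := by
  induction a using Nat.strong_induction_on with
  | _ a ih =>
    rcases Nat.eq_zero_or_pos a with h0 | h0
    · exact h0
    have h1 : a % B = 0 := by simpa using h 0
    have h2 : a / B = 0 := ih (a / B) (Nat.div_lt_self h0 hB) (fun c => by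
      have := h (c + 1)
      rwa [pow_succ', ← Nat.div_div_eq_div_mul] at this)
    have e := Nat.mod_add_div a B
    rw [h1, h2, Nat.mul_zero] at e
    omega

lemma digits_inj {B : ℕ} (hB : 1 < B) {a b : ℕ}
    (h : ∀ c, a / B ^ c % B = b / B ^ c % B) : a = b := by
  induction a using Nat.strong_induction_on generalizing b with
  | _ a ih =>
    rcases Nat.eq_zero_or_pos a with h0 | h0
    · subst h0
      exact (digits_zero hB (fun c => by simpa using (h c).symm)).symm
    have h1 : a % B = b % B := by simpa using h 0
    have h2 : a / B = b / B := ih (a / B) (Nat.div_lt_self h0 hB) (fun c => by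
      have := h (c + 1)
      rwa [pow_succ', ← Nat.div_div_eq_div_mul, ← Nat.div_div_eq_div_mul] at this)
    conv_lhs => rw [← Nat.mod_add_div a B]
    conv_rhs => rw [← Nat.mod_add_div b B]
    rw [h1, h2]

lemma digit_combine {B : ℕ} (hB : 1 < B) {x : ℕ} (e k c : ℕ) (hx : x < B ^ k) :
    (x + e * B ^ k) / B ^ c % B = if c < k then x / B ^ c % B else e / B ^ (c - k) % B := by
  split
  case isTrue hc =>
    have hk : B ^ k = B ^ (k - c) * B ^ c := by rw [← pow_add]; congr 1; omega
    rw [hk, ← mul_assoc, Nat.add_mul_div_right _ _ (pow_pos (by omega) c)]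
    have hk2 : B ^ (k - c) = B ^ (k - c - 1) * B := by
      rw [← pow_succ]; congr 1; omega
    rw [hk2, ← mul_assoc, Nat.add_mul_mod_self_right]
  case isFalse hc =>
    have h1 : (x + e * B ^ k) / B ^ k = e := by
      rw [Nat.add_mul_div_right _ _ (pow_pos (by omega) k), Nat.div_eq_of_lt hx, Nat.zero_add]
    have hc2 : B ^ c = B ^ k * B ^ (c - k) := by rw [← pow_add]; congr 1; omega
    rw [hc2, ← Nat.div_div_eq_div_mul, h1]

lemma digit_bfNode {B : ℕ} (hB : 1 < B) (u t j c : ℕ) :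
    bfNode B u t j / B ^ c % B = if c < j then t / B ^ c % B else u / B ^ c % B := by
  unfold bfNode
  rw [digit_combine hB _ j c (Nat.mod_lt _ (pow_pos (by omega) j))]
  split
  case isTrue hc =>
    conv_rhs => rw [← Nat.mod_add_div' t (B ^ j)]
    rw [digit_combine hB _ j c (Nat.mod_lt _ (pow_pos (by omega) j)), if_pos hc]
  case isFalse hc =>
    rw [Nat.div_div_eq_div_mul, ← pow_add]
    have : j + (c - j) = c := by omega
    rw [this]

lemma mod_eq_of_digits {B : ℕ} (hB : 1 < B) {a b k : ℕ}
    (h : ∀ c < k, a / B ^ c % B = b / B ^ c % B) : a % B ^ k = b % B ^ k := by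
  apply digits_inj hB
  intro c
  rcases lt_or_ge c k with hc | hc
  · have da : a % B ^ k / B ^ c % B = a / B ^ c % B := by
      conv_rhs => rw [← Nat.mod_add_div' a (B ^ k)]
      rw [digit_combine hB _ k c (Nat.mod_lt _ (pow_pos (by omega) k)), if_pos hc]
    have db : b % B ^ k / B ^ c % B = b / B ^ c % B := by
      conv_rhs => rw [← Nat.mod_add_div' b (B ^ k)]
      rw [digit_combine hB _ k c (Nat.mod_lt _ (pow_pos (by omega) k)), if_pos hc]
    rw [da, db]; exact h c hc
  · have ha : a % B ^ k / B ^ c = 0 := Nat.div_eq_of_lt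
      (lt_of_lt_of_le (Nat.mod_lt _ (pow_pos (by omega) k)) (Nat.pow_le_pow_right (by omega) hc))
    have hb : b % B ^ k / B ^ c = 0 := Nat.div_eq_of_lt
      (lt_of_lt_of_le (Nat.mod_lt _ (pow_pos (by omega) k)) (Nat.pow_le_pow_right (by omega) hc))
    rw [ha, hb]

lemma div_eq_of_digits {B : ℕ} (hB : 1 < B) {a b k : ℕ}
    (h : ∀ c, k ≤ c → a / B ^ c % B = b / B ^ c % B) : a / B ^ k = b / B ^ k := by
  apply digits_inj hB
  intro c
  rw [Nat.div_div_eq_div_mul, ← pow_add, Nat.div_div_eq_div_mul, ← pow_add]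
  exact h (k + c) (by omega)

lemma bfNode_lt {B d : ℕ} (hB : 1 < B) {u t j : ℕ} (hu : u < B ^ d) (hj : j ≤ d) :
    bfNode B u t j < B ^ d := by
  have h1 : t % B ^ j < B ^ j := Nat.mod_lt _ (pow_pos (by omega) j)
  have h2 : u / B ^ j < B ^ (d - j) := by
    rw [Nat.div_lt_iff_lt_mul (pow_pos (by omega) j), ← pow_add]
    have : d - j + j = d := by omega
    rw [this]; exact hu
  have h3 : u / B ^ j * B ^ j ≤ (B ^ (d - j) - 1) * B ^ j :=
    Nat.mul_le_mul_right _ (by omega)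
  have h4 : (B ^ (d - j) - 1) * B ^ j = B ^ d - B ^ j := by
    rw [Nat.sub_one_mul, ← pow_add]
    have : d - j + j = d := by omega
    rw [this]
  have h5 : B ^ j ≤ B ^ d := Nat.pow_le_pow_right (by omega) hj
  unfold bfNode
  omega

lemma gadget_exists {B d b : ℕ} (hB : 1 < B)
    (label : ℕ → ℕ → ℕ → (Fin b → ZMod 2)) {s t : ℕ} (hs : s < B ^ d) (ht : t < B ^ d) :
    ∀ i ≤ d, Relation.ReflTransGen (GadgetStep B d b label) ((0, s), 0)
      ((i, bfNode B s t i),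
        ∑ j ∈ Finset.range i, label j (bfNode B s t j) (bfNode B s t (j + 1))) := by
  intro i
  induction i with
  | zero =>
    intro _
    have h1 : bfNode B s t 0 = s := by simp [bfNode, Nat.mod_one]
    rw [h1]
    simp only [Finset.range_zero, Finset.sum_empty]
    exact Relation.ReflTransGen.refl
  | succ i ih =>
    intro hid
    refine Relation.ReflTransGen.tail (ih (by omega)) ?_
    refine ⟨rfl, show i < d by omega, bfNode_lt hB hs (by omega), bfNode_lt hB hs (by omega), ?_, ?_⟩
    · intro c hc
      rw [digit_bfNode hB, digit_bfNode hB]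
      rcases lt_trichotomy c i with h | h | h
      · rw [if_pos h, if_pos (by omega)]
      · exact absurd h hc
      · rw [if_neg (by omega), if_neg (by omega)]
    · exact Finset.sum_range_succ _ _

lemma gadget_uniq {B d b : ℕ} (hB : 1 < B)
    (label : ℕ → ℕ → ℕ → (Fin b → ZMod 2)) {t : ℕ} (ht : t < B ^ d) (σ : Fin b → ZMod 2) :
    ∀ x, Relation.ReflTransGen (GadgetStep B d b label) x ((d, t), σ) →
      x.1.1 ≤ d ∧ (x.1.2 < B ^ d →
        ((∀ c < x.1.1, x.1.2 / B ^ c % B = t / B ^ c % B) ∧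
         σ = x.2 + ∑ j ∈ Finset.Ico x.1.1 d,
           label j (bfNode B x.1.2 t j) (bfNode B x.1.2 t (j + 1)))) := by
  intro x hx
  induction hx using Relation.ReflTransGen.head_induction_on with
  | refl =>
    refine ⟨le_refl d, fun _ => ⟨fun c hc => rfl, by simp⟩⟩
  | head hstep hrest ih =>
    rename_i a y
    obtain ⟨h1, h2, h3, h4, h5, h6⟩ := hstep
    obtain ⟨ihd, ihP⟩ := ih
    obtain ⟨hagv, hsig⟩ := ihP h4
    rw [h1] at hagv ihd
    refine ⟨by omega, fun _ => ?_⟩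
    have hagu : ∀ c < a.1.1, a.1.2 / B ^ c % B = t / B ^ c % B := by
      intro c hc
      rw [h5 c (by omega)]
      exact hagv c (by omega)
    refine ⟨hagu, ?_⟩
    have hu_mod : a.1.2 % B ^ a.1.1 = t % B ^ a.1.1 := mod_eq_of_digits hB hagu
    have hnode_i : bfNode B a.1.2 t a.1.1 = a.1.2 := by
      unfold bfNode
      rw [← hu_mod, Nat.mod_add_div']
    have hnode_si : bfNode B a.1.2 t (a.1.1 + 1) = y.1.2 := by
      apply digits_inj hB
      intro c
      rw [digit_bfNode hB]
      split
      case isTrue hc => exact (hagv c hc).symm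
      case isFalse hc => exact h5 c (by omega)
    have hdivs : ∀ j, a.1.1 + 1 ≤ j → a.1.2 / B ^ j = y.1.2 / B ^ j := fun j hj =>
      div_eq_of_digits hB (fun c hc => h5 c (by omega))
    have hFeq : ∑ j ∈ Finset.Ico (a.1.1 + 1) d,
        label j (bfNode B y.1.2 t j) (bfNode B y.1.2 t (j + 1)) =
        ∑ j ∈ Finset.Ico (a.1.1 + 1) d,
        label j (bfNode B a.1.2 t j) (bfNode B a.1.2 t (j + 1)) := by
      refine Finset.sum_congr rfl (fun j hj => ?_)
      rw [Finset.mem_Ico] at hj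
      unfold bfNode
      rw [hdivs j hj.1, hdivs (j + 1) (by omega)]
    rw [hsig, h6, h1, hFeq, Finset.sum_eq_sum_Ico_succ_bot h2, hnode_i, hnode_si, add_assoc]

/-- In the reachability gadget built from a Butterfly graph with `b`-bit edge labels,
for any source `s` and sink `t`, the node `s^{0…0}` reaches exactly the copy `t^σ`
with `σ` the XOR of labels along the unique `s`-`t` path; in particular
`s^{0…0}` reaches `t^{0…0}` iff that XOR is the all-zero string. -/
theorem gadget_reaches_xor (B d b : ℕ) (hB : 2 ≤ B) (hd : 1 ≤ d)
    (label : ℕ → ℕ → ℕ → (Fin b → ZMod 2)) (s t : ℕ)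
    (hs : s < B ^ d) (ht : t < B ^ d) :
    (∀ σ : Fin b → ZMod 2,
      Relation.ReflTransGen (GadgetStep B d b label) ((0, s), 0) ((d, t), σ)
        ↔ σ = bfPathXor B d b label s t) ∧
    (Relation.ReflTransGen (GadgetStep B d b label) ((0, s), 0) ((d, t), 0)
        ↔ bfPathXor B d b label s t = 0) := by
  have hB1 : 1 < B := by omega
  have main : ∀ σ : Fin b → ZMod 2,
      Relation.ReflTransGen (GadgetStep B d b label) ((0, s), 0) ((d, t), σ)
        ↔ σ = bfPathXor B d b label s t := by
    intro σ
    constructor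
    · intro h
      have h2 := ((gadget_uniq hB1 label ht σ ((0, s), 0) h).2 hs).2
      rw [h2, zero_add, bfPathXor, Finset.range_eq_Ico]
    · intro h
      subst h
      have hex := gadget_exists hB1 label hs ht d le_rfl
      have hnode : bfNode B s t d = t := by
        unfold bfNode
        rw [Nat.mod_eq_of_lt ht, Nat.div_eq_of_lt hs, Nat.zero_mul, Nat.add_zero]
      rw [hnode] at hex
      exact hex
  exact ⟨main, by rw [main 0, eq_comm]⟩
end
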